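/- Let α > 0 and μ the measure x^α dx on (0,∞). Let I ⊆ (0,∞) be an interval with center c_I and length τ, and let a = μ(I)⁻¹ 𝟙_I. If P_t(x,y) satisfies the Gaussian upper bound P_t(x,y) ≤ C μ(B(x,√t))⁻¹ exp(-|x-y|²/(c t)), then ∫_{|x-c_I| ≥ 2τ} sup_{0 < t ≤ τ²} ∫_I P_t(x,y) a(y) dμ(y) dμ(x) ≤ C', with C' depending only on α, C, c. -/

import Mathlib

open MeasureTheory

noncomputable def besselMeasure (α : ℝ) : Measure ℝ :=
  (volume.restrict (Set.Ioi (0 : ℝ))).withDensity fun x => ENNReal.ofReal (x ^ α)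

/-!
For `x` with `|x - c_I| ≥ 2τ` and `y ∈ I` one has `|x - y| ≥ ¾ |x - c_I|`. Since
`μ(B(x, √t)) ≥ x^α √t` and `e^{-u} ≤ 1/u`, the Gaussian bound gives, for `t ≤ τ²`,
`P_t(x, y) ≤ C c √t / (x^α (x - y)²) ≤ (16/9) C c τ / (x^α (x - c_I)²)`.
This survives averaging over `I` and the supremum over `t`. Integrating against `x^α dx`
the weight cancels, and `∫_{|x - c_I| ≥ 2τ} τ (x - c_I)⁻² dx = 1`, so `C' = 16 C c / 9`.
-/

open Set Real

lemma integrableOn_Ioi_inv_sq {d : ℝ} (hd : 0 < d) :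
    IntegrableOn (fun u : ℝ => (u ^ 2)⁻¹) (Ioi d) := by
  refine (integrableOn_Ioi_rpow_of_lt (a := -2) (by norm_num) hd).congr_fun (fun u hu => ?_)
    measurableSet_Ioi
  simp [rpow_neg (hd.trans hu).le]

lemma integral_Ioi_inv_sq {d : ℝ} (hd : 0 < d) : ∫ u in Ioi d, (u ^ 2)⁻¹ = d⁻¹ := by
  rw [← setIntegral_congr_fun measurableSet_Ioi (fun u (hu : d < u) => by
    simp [rpow_neg (hd.trans hu).le] : EqOn (fun u : ℝ => u ^ (-2 : ℝ)) _ _),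
    integral_Ioi_rpow_of_lt (by norm_num) hd]
  norm_num [rpow_neg_one]

lemma setOf_le_abs_eq_Iic_union_Ici {d : ℝ} : {u : ℝ | d ≤ |u|} = Iic (-d) ∪ Ici d := by
  ext u; simp [le_abs']

lemma integrableOn_inv_sq_of_le_abs {d : ℝ} (hd : 0 < d) :
    IntegrableOn (fun u : ℝ => (u ^ 2)⁻¹) {u | d ≤ |u|} := by
  have hIci : IntegrableOn (fun u : ℝ => (u ^ 2)⁻¹) (Ici d) :=
    (integrableOn_Ici_iff_integrableOn_Ioi).2 (integrableOn_Ioi_inv_sq hd)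
  have hIic : IntegrableOn (fun u : ℝ => (u ^ 2)⁻¹) (Iic (-d)) := by
    rw [← (Measure.measurePreserving_neg volume).integrableOn_comp_preimage measurableEmbedding_neg]
      at hIci
    simpa [Function.comp_def] using hIci
  rw [setOf_le_abs_eq_Iic_union_Ici]
  exact hIic.union hIci

lemma integral_inv_sq_of_le_abs {d : ℝ} (hd : 0 < d) :
    ∫ u in {u : ℝ | d ≤ |u|}, (u ^ 2)⁻¹ = 2 / d := by
  have hint := integrableOn_inv_sq_of_le_abs hd
  rw [setOf_le_abs_eq_Iic_union_Ici] at hint ⊢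
  rw [setIntegral_union (Iic_disjoint_Ici.2 (by linarith)) measurableSet_Ici
    (hint.mono_set subset_union_left) (hint.mono_set subset_union_right),
    integral_Ici_eq_integral_Ioi, ← integral_comp_neg_Ioi]
  simp only [neg_sq, integral_Ioi_inv_sq hd]
  ring

lemma integrableOn_inv_sq_sub_of_le_abs (b : ℝ) {d : ℝ} (hd : 0 < d) :
    IntegrableOn (fun x : ℝ => ((x - b) ^ 2)⁻¹) {x | d ≤ |x - b|} :=
  ((measurePreserving_sub_right volume b).integrableOn_comp_preimage
    (measurableEmbedding_subRight b)).2 (integrableOn_inv_sq_of_le_abs hd)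

lemma integral_inv_sq_sub_of_le_abs (b : ℝ) {d : ℝ} (hd : 0 < d) :
    ∫ x in {x : ℝ | d ≤ |x - b|}, ((x - b) ^ 2)⁻¹ = 2 / d :=
  ((measurePreserving_sub_right volume b).setIntegral_preimage_emb
    (measurableEmbedding_subRight b) (fun u => (u ^ 2)⁻¹) {u | d ≤ |u|}).trans
    (integral_inv_sq_of_le_abs hd)

lemma measurable_ofReal_rpow (α : ℝ) : Measurable fun x : ℝ => ENNReal.ofReal (x ^ α) := by
  fun_prop

lemma besselMeasure_apply (α : ℝ) {s : Set ℝ} (hs : MeasurableSet s) :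
    besselMeasure α s = ∫⁻ x in s ∩ Ioi 0, ENNReal.ofReal (x ^ α) := by
  rw [besselMeasure, withDensity_apply _ hs, Measure.restrict_restrict hs]

lemma besselMeasure_Iic_lt_top {α : ℝ} (hα : 0 ≤ α) (b : ℝ) : besselMeasure α (Iic b) < ⊤ := by
  rw [besselMeasure_apply α measurableSet_Iic, Iic_inter_Ioi]
  calc ∫⁻ x in Ioc 0 b, ENNReal.ofReal (x ^ α)
      ≤ ∫⁻ _ in Ioc 0 b, ENNReal.ofReal (b ^ α) :=
        setLIntegral_mono measurable_const fun x hx =>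
          ENNReal.ofReal_le_ofReal (rpow_le_rpow hx.1.le hx.2 hα)
    _ < ⊤ := by simp [ENNReal.mul_lt_top]

lemma ofReal_rpow_mul_le_besselMeasure_Ioo {α a : ℝ} (hα : 0 ≤ α) (ha : 0 ≤ a) (b : ℝ) :
    ENNReal.ofReal (a ^ α * (b - a)) ≤ besselMeasure α (Ioo a b) := by
  have hpos : Ioo a b ⊆ Ioi 0 := fun x hx => ha.trans_lt hx.1
  rw [besselMeasure_apply α measurableSet_Ioo, inter_eq_left.2 hpos,
    ENNReal.ofReal_mul (rpow_nonneg ha α), ← Real.volume_Ioo, ← setLIntegral_const]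
  exact setLIntegral_mono (measurable_ofReal_rpow α) fun x hx =>
    ENNReal.ofReal_le_ofReal (rpow_le_rpow ha hx.1.le hα)

lemma rpow_mul_le_besselMeasure_ball {α x : ℝ} (hα : 0 ≤ α) (hx : 0 ≤ x) (r : ℝ) :
    x ^ α * r ≤ (besselMeasure α (Metric.ball x r ∩ Ioi 0)).toReal := by
  have hsub : Ioo x (x + r) ⊆ Metric.ball x r ∩ Ioi 0 := fun y hy =>
    ⟨by rw [ball_eq_Ioo]; exact ⟨by linarith [hy.1, hy.2], hy.2⟩, hx.trans_lt hy.1⟩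
  have hfin : besselMeasure α (Metric.ball x r ∩ Ioi 0) ≠ ⊤ := by
    refine ne_top_of_le_ne_top (besselMeasure_Iic_lt_top hα (x + r)).ne (measure_mono ?_)
    intro y hy
    rw [mem_inter_iff, ball_eq_Ioo] at hy
    exact hy.1.2.le
  rw [← ENNReal.ofReal_le_iff_le_toReal hfin]
  simpa using (ofReal_rpow_mul_le_besselMeasure_Ioo hα hx (x + r)).trans (measure_mono hsub)

lemma restrict_besselMeasure (α : ℝ) {s : Set ℝ} (hs : MeasurableSet s) (hs0 : s ⊆ Ioi 0) :
    (besselMeasure α).restrict s =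
      (volume.restrict s).withDensity fun x => ENNReal.ofReal (x ^ α) := by
  rw [besselMeasure, restrict_withDensity hs, Measure.restrict_restrict hs, inter_eq_left.2 hs0]

lemma integrableOn_besselMeasure_iff (α : ℝ) {s : Set ℝ} (hs : MeasurableSet s) (hs0 : s ⊆ Ioi 0)
    {f : ℝ → ℝ} : IntegrableOn f s (besselMeasure α) ↔ IntegrableOn (fun x => x ^ α * f x) s := by
  rw [IntegrableOn, restrict_besselMeasure α hs hs0, integrable_withDensity_iff_integrable_smul'
    (measurable_ofReal_rpow α) (ae_of_all _ fun _ => ENNReal.ofReal_lt_top)]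
  refine integrableOn_congr_fun (fun x hx => ?_) hs
  simp [ENNReal.toReal_ofReal (rpow_nonneg (hs0 hx).le α)]

lemma setIntegral_besselMeasure (α : ℝ) {s : Set ℝ} (hs : MeasurableSet s) (hs0 : s ⊆ Ioi 0)
    (f : ℝ → ℝ) : ∫ x in s, f x ∂besselMeasure α = ∫ x in s, x ^ α * f x := by
  rw [restrict_besselMeasure α hs hs0, integral_withDensity_eq_integral_toReal_smul
    (measurable_ofReal_rpow α) (ae_of_all _ fun _ => ENNReal.ofReal_lt_top)]
  refine setIntegral_congr_fun hs fun x hx => ?_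
  simp [ENNReal.toReal_ofReal (rpow_nonneg (hs0 hx).le α)]

lemma exp_neg_le_inv {u : ℝ} (hu : 0 < u) : exp (-u) ≤ u⁻¹ := by
  rw [exp_neg]
  exact inv_anti₀ hu (by linarith [add_one_le_exp u])

/-- If `μ s` is `0` or `∞`, the junk value `(μ s).toReal⁻¹ = 0` makes the left side `0`. -/
lemma setIntegral_mul_inv_measure_le {X : Type*} [MeasurableSpace X] {μ : Measure X} {s : Set X}
    {f : X → ℝ} {M : ℝ} (hM : 0 ≤ M) (hf0 : ∀ y ∈ s, 0 ≤ f y) (hfM : ∀ y ∈ s, f y ≤ M) :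
    ∫ y in s, f y * (μ s).toReal⁻¹ ∂μ ≤ M := by
  rw [integral_mul_const]
  rcases eq_or_ne (μ s).toReal 0 with hs | hs
  · simp [hs, hM]
  have hfin : μ s < ⊤ := lt_top_iff_ne_top.2 fun h => hs (by simp [h])
  have hint : ‖∫ y in s, f y ∂μ‖ ≤ M * μ.real s :=
    norm_setIntegral_le_of_norm_le_const hfin fun y hy => by
      rw [norm_of_nonneg (hf0 y hy)]; exact hfM y hy
  rw [mul_inv_le_iff₀ (lt_of_le_of_ne ENNReal.toReal_nonneg hs.symm)]
  exact (le_norm_self _).trans hint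

lemma gaussian_majorant_le {α C c t x y : ℝ} (hα : 0 ≤ α) (hC : 0 ≤ C) (hc : 0 < c) (ht : 0 < t)
    (hx : 0 < x) (hxy : x ≠ y) :
    C * ((besselMeasure α (Metric.ball x (√t) ∩ Ioi 0)).toReal)⁻¹ *
        exp (-(x - y) ^ 2 / (c * t)) ≤ C * c * √t / (x ^ α * (x - y) ^ 2) := by
  have hxy2 : 0 < (x - y) ^ 2 := by have := sub_ne_zero.2 hxy; positivity
  have hxα : 0 < x ^ α := rpow_pos_of_pos hx α
  have hst : 0 < √t := sqrt_pos.2 ht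
  calc _ ≤ C * (x ^ α * √t)⁻¹ * (c * t / (x - y) ^ 2) := by
        gcongr
        · exact rpow_mul_le_besselMeasure_ball hα hx.le _
        · rw [neg_div]
          exact (exp_neg_le_inv (div_pos hxy2 (mul_pos hc ht))).trans_eq (inv_div _ _)
    _ = C * c * √t / (x ^ α * (x - y) ^ 2) := by
        rw [← div_sqrt (x := t)]
        field_simp
        rw [sq_sqrt ht.le]

lemma gaussian_majorant_le_of_two_mul_le_abs {α C c τ t x y b : ℝ} (hα : 0 ≤ α) (hC : 0 ≤ C)
    (hc : 0 < c) (hτ : 0 < τ) (ht : t ∈ Ioc 0 (τ ^ 2)) (hx : 0 < x) (hxb : 2 * τ ≤ |x - b|)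
    (hyb : |y - b| ≤ τ / 2) :
    C * ((besselMeasure α (Metric.ball x (√t) ∩ Ioi 0)).toReal)⁻¹ *
        exp (-(x - y) ^ 2 / (c * t)) ≤ 16 / 9 * C * c * τ * ((x - b) ^ 2)⁻¹ / x ^ α := by
  have hxy : 3 / 4 * |x - b| ≤ |x - y| := by linarith [abs_sub_le x y b]
  have hxy0 : 0 < |x - y| := by linarith
  have hsq : 9 / 16 * (x - b) ^ 2 ≤ (x - y) ^ 2 := by
    rw [← sq_abs (x - b), ← sq_abs (x - y)]; nlinarith
  have hst : √t ≤ τ := by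
    rw [← sqrt_sq hτ.le]; exact sqrt_le_sqrt ht.2
  have hxα : 0 < x ^ α := rpow_pos_of_pos hx α
  have hxb2 : 0 < (x - b) ^ 2 := by rw [← sq_abs]; exact pow_pos (by linarith) 2
  calc _ ≤ C * c * √t / (x ^ α * (x - y) ^ 2) :=
        gaussian_majorant_le hα hC hc ht.1 hx (sub_ne_zero.1 (abs_pos.1 hxy0))
    _ ≤ C * c * τ / (x ^ α * (9 / 16 * (x - b) ^ 2)) := by gcongr
    _ = 16 / 9 * C * c * τ * ((x - b) ^ 2)⁻¹ / x ^ α := by field_simp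

lemma setIntegral_besselMeasure_le_of_le_div_rpow {α : ℝ} {s : Set ℝ} (hs : MeasurableSet s)
    {F h : ℝ → ℝ} (hF0 : ∀ x, 0 ≤ F x) (hh0 : ∀ x, 0 ≤ h x) (hh : IntegrableOn h s)
    (hFh : ∀ x ∈ Ioi 0 ∩ s, F x ≤ h x / x ^ α) :
    ∫ x in Ioi 0 ∩ s, F x ∂besselMeasure α ≤ ∫ x in s, h x := by
  have hs' : MeasurableSet (Ioi 0 ∩ s) := measurableSet_Ioi.inter hs
  have hcancel : EqOn (fun x => x ^ α * (h x / x ^ α)) h (Ioi 0 ∩ s) := fun x hx =>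
    mul_div_cancel₀ _ (rpow_pos_of_pos hx.1 α).ne'
  calc ∫ x in Ioi 0 ∩ s, F x ∂besselMeasure α
      ≤ ∫ x in Ioi 0 ∩ s, h x / x ^ α ∂besselMeasure α :=
        integral_mono_of_nonneg (ae_of_all _ hF0)
          ((integrableOn_besselMeasure_iff α hs' inter_subset_left).2
            ((hh.mono_set inter_subset_right).congr_fun hcancel.symm hs'))
          (ae_restrict_of_forall_mem hs' hFh)
    _ = ∫ x in Ioi 0 ∩ s, h x := by
        rw [setIntegral_besselMeasure α hs' inter_subset_left]
        exact setIntegral_congr_fun hs' hcancel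
    _ ≤ ∫ x in s, h x := setIntegral_mono_set hh (ae_of_all _ hh0) inter_subset_right.eventuallyLE

def GaussianUpperBound (α C c : ℝ) (P : ℝ → ℝ → ℝ → ℝ) : Prop :=
  ∀ t x y, 0 < t → 0 < x → 0 < y →
    P t x y ≤ C * ((besselMeasure α (Metric.ball x (√t) ∩ Ioi 0)).toReal)⁻¹ *
      exp (-(x - y) ^ 2 / (c * t))

lemma iSup_average_le_of_gaussianUpperBound {α C c τ b x : ℝ} {P : ℝ → ℝ → ℝ → ℝ} (hα : 0 ≤ α)
    (hC : 0 ≤ C) (hc : 0 < c) (hτ : 0 < τ) (hb : 0 < b - τ / 2) (hP0 : ∀ t x y, 0 ≤ P t x y)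
    (hP : GaussianUpperBound α C c P) (hx : 0 < x) (hxb : 2 * τ ≤ |x - b|) :
    ⨆ t ∈ Ioc 0 (τ ^ 2), ∫ y in Icc (b - τ / 2) (b + τ / 2),
        P t x y * (besselMeasure α (Icc (b - τ / 2) (b + τ / 2))).toReal⁻¹ ∂besselMeasure α
      ≤ 16 / 9 * C * c * τ * ((x - b) ^ 2)⁻¹ / x ^ α := by
  have hM : 0 ≤ 16 / 9 * C * c * τ * ((x - b) ^ 2)⁻¹ / x ^ α := by positivity
  refine Real.iSup_le (fun t => Real.iSup_le (fun ht => ?_) hM) hM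
  refine setIntegral_mul_inv_measure_le hM (fun y _ => hP0 t x y) fun y hy => ?_
  have hyb : |y - b| ≤ τ / 2 := abs_sub_le_iff.2 ⟨by linarith [hy.2], by linarith [hy.1]⟩
  exact (hP t x y ht.1 hx (by linarith [hy.1])).trans
    (gaussian_majorant_le_of_two_mul_le_abs hα hC hc hτ ht hx hxb hyb)

theorem local_atom_estimate (α C c : ℝ) (hα : 0 < α) (hC : 0 < C) (hc : 0 < c) :
    ∃ C' > (0 : ℝ), ∀ (P : ℝ → ℝ → ℝ → ℝ) (cI τ : ℝ),
      0 < τ → 0 < cI - τ / 2 →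
      (∀ t x y, 0 ≤ P t x y) →
      (∀ t x y, 0 < t → 0 < x → 0 < y →
        P t x y ≤ C *
          (((besselMeasure α) (Metric.ball x (Real.sqrt t) ∩ Set.Ioi 0)).toReal)⁻¹ *
          Real.exp (-(x - y) ^ 2 / (c * t))) →
      (∫ x in {x : ℝ | 0 < x ∧ 2 * τ ≤ |x - cI|},
          (⨆ t ∈ Set.Ioc (0 : ℝ) (τ ^ 2),
            ∫ y in Set.Icc (cI - τ / 2) (cI + τ / 2),
              P t x y * (((besselMeasure α) (Set.Icc (cI - τ / 2) (cI + τ / 2))).toReal)⁻¹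
              ∂(besselMeasure α))
          ∂(besselMeasure α)) ≤ C' := by
  refine ⟨16 / 9 * C * c, by positivity, fun P cI τ hτ hI hP0 hP => ?_⟩
  have hfar : MeasurableSet {x : ℝ | 2 * τ ≤ |x - cI|} :=
    measurableSet_le measurable_const (by fun_prop)
  have h2τ : 0 < 2 * τ := by positivity
  calc _ ≤ ∫ x in {x : ℝ | 2 * τ ≤ |x - cI|}, 16 / 9 * C * c * τ * ((x - cI) ^ 2)⁻¹ :=
        setIntegral_besselMeasure_le_of_le_div_rpow hfar
          (fun x => Real.iSup_nonneg fun t => Real.iSup_nonneg fun _ => integral_nonneg fun y =>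
            mul_nonneg (hP0 t x y) (inv_nonneg.2 ENNReal.toReal_nonneg))
          (fun x => by positivity) ((integrableOn_inv_sq_sub_of_le_abs cI h2τ).const_mul _)
          fun x hx => iSup_average_le_of_gaussianUpperBound hα.le hC.le hc hτ hI hP0 hP hx.1 hx.2
    _ = 16 / 9 * C * c := by
        rw [integral_const_mul, integral_inv_sq_sub_of_le_abs cI h2τ]
        field_simp
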